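/- arXiv:2311.04158 — 2 statements merged into one kernel-verified Lean document; each statement's English description precedes it below -/
import Mathlib

section
/- Let B ∈ ℝ^{m×d} have full column rank, let a ∈ ℝ^d be nonzero, and let p ≥ 1. Let B′ ∈ ℝ^{(m+1)×d} be obtained from B by appending aᵀ as an additional row. Then the ℓp sensitivity of a with respect to B′ satisfies σ_p^{B′}(a) = 1 / (1 + 1/σ_p^B(a)). -/
/-!
Appending the row `aᵀ` adds `|⟨a,x⟩|^p` to `‖Bx‖_p^p`, so every ratio `r` defining `σ_p^B(a)`
becomes `r / (1 + r)` for `B'`. Since `r ↦ r / (1 + r)` is increasing and continuous on `[0, ∞)`,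
it commutes with the supremum; the supremum is finite because `x ↦ ⟨a,x⟩` factors continuously
through the injective map `x ↦ Bx`.
-/

open Matrix BigOperators

/-- The ℓp sensitivity of a vector `a` with respect to a matrix `B`:
`σ_p^B(a) = sup { |⟨a,x⟩|^p / ‖Bx‖_p^p : x, Bx ≠ 0 }`. -/
noncomputable def sens (p : ℝ) {m d : ℕ} (B : Matrix (Fin m) (Fin d) ℝ)
    (a : Fin d → ℝ) : ℝ :=
  sSup {r : ℝ | ∃ x : Fin d → ℝ, B.mulVec x ≠ 0 ∧
    r = |a ⬝ᵥ x| ^ p / ∑ i, |B.mulVec x i| ^ p}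

theorem sum_abs_rpow_pos {ι : Type*} [Fintype ι] {y : ι → ℝ} (hy : y ≠ 0) (p : ℝ) :
    0 < ∑ i, |y i| ^ p := by
  obtain ⟨i, hi⟩ := Function.ne_iff.mp hy
  exact Finset.sum_pos' (fun j _ ↦ by positivity)
    ⟨i, Finset.mem_univ i, Real.rpow_pos_of_pos (abs_pos.mpr hi) p⟩

theorem norm_rpow_le_sum_abs_rpow {ι : Type*} [Fintype ι] (y : ι → ℝ) {p : ℝ} (hp : 0 < p) :
    ‖y‖ ^ p ≤ ∑ i, |y i| ^ p := by
  rcases isEmpty_or_nonempty ι with hι | hι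
  · simp [Subsingleton.elim y 0, Real.zero_rpow hp.ne']
  obtain ⟨i, -, hi⟩ := Finset.univ.exists_mem_eq_sup Finset.univ_nonempty fun i ↦ ‖y i‖₊
  have hyi : ‖y‖ = |y i| := by rw [Pi.norm_def, hi]; rfl
  rw [hyi]
  exact Finset.single_le_sum (f := fun i ↦ |y i| ^ p) (fun j _ ↦ by positivity) (Finset.mem_univ i)

theorem LinearMap.exists_abs_le_mul_norm_of_injective {V F : Type*} [AddCommGroup V]
    [Module ℝ V] [NormedAddCommGroup F] [NormedSpace ℝ F] [FiniteDimensional ℝ F]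
    (f : V →ₗ[ℝ] F) (hf : Function.Injective f) (φ : V →ₗ[ℝ] ℝ) :
    ∃ C, 0 ≤ C ∧ ∀ x, |φ x| ≤ C * ‖f x‖ := by
  obtain ⟨g, hg⟩ := f.exists_leftInverse_of_injective (LinearMap.ker_eq_bot.mpr hf)
  let ψ : F →L[ℝ] ℝ := LinearMap.toContinuousLinearMap (φ ∘ₗ g)
  have hψ : ∀ x, ψ (f x) = φ x := fun x ↦ by
    simp [ψ, ← LinearMap.comp_apply g f, hg]
  refine ⟨‖ψ‖, norm_nonneg _, fun x ↦ ?_⟩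
  rw [← hψ, ← Real.norm_eq_abs]
  exact ψ.le_opNorm (f x)

theorem csSup_image_div_one_add {S : Set ℝ} (hne : S.Nonempty) (hbdd : BddAbove S)
    (hnonneg : ∀ r ∈ S, 0 ≤ r) :
    sSup ((fun r ↦ r / (1 + r)) '' S) = sSup S / (1 + sSup S) := by
  have hsup : 0 ≤ sSup S := (hnonneg _ hne.some_mem).trans (le_csSup hbdd hne.some_mem)
  have hmono : MonotoneOn (fun r : ℝ ↦ r / (1 + r)) S := by
    intro r hr r' _ hrr'
    have hr0 := hnonneg r hr
    dsimp only
    rw [div_le_div_iff₀ (by linarith) (by linarith)]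
    nlinarith
  have hcont : ContinuousAt (fun r : ℝ ↦ r / (1 + r)) (sSup S) :=
    continuousAt_id.div (continuousAt_const.add continuousAt_id) (by linarith)
  exact (hmono.map_csSup_of_continuousWithinAt hcont.continuousWithinAt hne hbdd).symm

theorem Matrix.of_snoc_mulVec {m d : ℕ} (B : Matrix (Fin m) (Fin d) ℝ) (a x : Fin d → ℝ) :
    (of (Fin.snoc B a) : Matrix (Fin (m + 1)) (Fin d) ℝ) *ᵥ x = Fin.snoc (B *ᵥ x) (a ⬝ᵥ x) := by
  ext i
  induction i using Fin.lastCases with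
  | last =>
    rw [Fin.snoc_last]
    exact congrArg (· ⬝ᵥ x) (Fin.snoc_last (α := fun _ ↦ Fin d → ℝ) (p := B) (x := a))
  | cast i =>
    rw [Fin.snoc_castSucc]
    exact congrArg (· ⬝ᵥ x) (Fin.snoc_castSucc (α := fun _ ↦ Fin d → ℝ) (p := B) (x := a) (i := i))

section Sensitivity

variable {ι κ : Type*} [Fintype ι] [Fintype κ]

def sensSet (p : ℝ) (B : Matrix ι κ ℝ) (a : κ → ℝ) : Set ℝ :=
  {r | ∃ x, B *ᵥ x ≠ 0 ∧ r = |a ⬝ᵥ x| ^ p / ∑ i, |(B *ᵥ x) i| ^ p}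

theorem sens_eq_sSup_sensSet (p : ℝ) {m d : ℕ} (B : Matrix (Fin m) (Fin d) ℝ) (a : Fin d → ℝ) :
    sens p B a = sSup (sensSet p B a) := rfl

variable {p : ℝ} {B : Matrix ι κ ℝ} {a : κ → ℝ}

theorem nonneg_of_mem_sensSet {r : ℝ} (hr : r ∈ sensSet p B a) : 0 ≤ r := by
  obtain ⟨x, -, rfl⟩ := hr
  positivity

theorem exists_pos_mem_sensSet (hB : Function.Injective B.mulVec) (ha : a ≠ 0) :
    ∃ r ∈ sensSet p B a, 0 < r := by
  have hBa : B *ᵥ a ≠ 0 := (hB.ne_iff' (mulVec_zero B)).mpr ha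
  refine ⟨_, ⟨a, hBa, rfl⟩, div_pos ?_ (sum_abs_rpow_pos hBa p)⟩
  exact Real.rpow_pos_of_pos (abs_pos.mpr (dotProduct_self_eq_zero.not.mpr ha)) p

theorem bddAbove_sensSet (hB : Function.Injective B.mulVec) (hp : 0 < p) :
    BddAbove (sensSet p B a) := by
  obtain ⟨C, hC, hbound⟩ :=
    B.mulVecLin.exists_abs_le_mul_norm_of_injective hB (dotProductBilin ℝ ℝ a)
  refine ⟨C ^ p, ?_⟩
  rintro r ⟨x, hx, rfl⟩
  rw [div_le_iff₀ (sum_abs_rpow_pos hx p)]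
  calc |a ⬝ᵥ x| ^ p ≤ (C * ‖B *ᵥ x‖) ^ p :=
        Real.rpow_le_rpow (abs_nonneg _) (hbound x) hp.le
    _ = C ^ p * ‖B *ᵥ x‖ ^ p := Real.mul_rpow hC (norm_nonneg _)
    _ ≤ C ^ p * ∑ i, |(B *ᵥ x) i| ^ p := by
        gcongr
        exact norm_rpow_le_sum_abs_rpow _ hp

end Sensitivity

theorem sensSet_snoc {p : ℝ} {m d : ℕ} {B : Matrix (Fin m) (Fin d) ℝ} {a : Fin d → ℝ}
    (hB : Function.Injective B.mulVec) :
    sensSet p (of (Fin.snoc B a) : Matrix (Fin (m + 1)) (Fin d) ℝ) a =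
      (fun r ↦ r / (1 + r)) '' sensSet p B a := by
  set B' : Matrix (Fin (m + 1)) (Fin d) ℝ := of (Fin.snoc B a)
  have hB' : Function.Injective B'.mulVec := fun x y hxy ↦ by
    simp only [B', of_snoc_mulVec] at hxy
    exact hB (Fin.snoc_injective2 hxy).1
  have hne : ∀ x, B' *ᵥ x ≠ 0 ↔ B *ᵥ x ≠ 0 :=
    fun x ↦ (hB'.ne_iff' (mulVec_zero _)).trans (hB.ne_iff' (mulVec_zero B)).symm
  have hratio : ∀ x, B *ᵥ x ≠ 0 →
      (fun r ↦ r / (1 + r)) (|a ⬝ᵥ x| ^ p / ∑ i, |(B *ᵥ x) i| ^ p) =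
        |a ⬝ᵥ x| ^ p / ∑ i, |(B' *ᵥ x) i| ^ p := by
    intro x hx
    have hs := sum_abs_rpow_pos hx p
    rw [of_snoc_mulVec, Fin.sum_univ_castSucc]
    simp only [Fin.snoc_castSucc, Fin.snoc_last]
    field_simp
  ext r
  constructor
  · rintro ⟨x, hx, rfl⟩
    exact ⟨_, ⟨x, (hne x).mp hx, rfl⟩, hratio x ((hne x).mp hx)⟩
  · rintro ⟨_, ⟨x, hx, rfl⟩, rfl⟩
    exact ⟨x, (hne x).mpr hx, hratio x hx⟩

/-- **Sensitivity after appending the row:** if `B'` is `B` with the row `aᵀ`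
appended, then `σ_p^{B'}(a) = 1 / (1 + 1/σ_p^B(a))`. -/
theorem sensitivity_append_row
    {m d : ℕ} (B : Matrix (Fin m) (Fin d) ℝ)
    (hB : LinearIndependent ℝ Bᵀ)
    (a : Fin d → ℝ) (ha : a ≠ 0) (p : ℝ) (hp : 1 ≤ p) :
    sens p (Matrix.of (Fin.snoc B a) : Matrix (Fin (m + 1)) (Fin d) ℝ) a
      = 1 / (1 + 1 / sens p B a) := by
  have hinj : Function.Injective B.mulVec := mulVec_injective_iff.mpr hB
  have hbdd : BddAbove (sensSet p B a) := bddAbove_sensSet hinj (by linarith)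
  obtain ⟨r, hr, hr_pos⟩ := exists_pos_mem_sensSet (p := p) hinj ha
  have hsens_pos : 0 < sens p B a := hr_pos.trans_le (le_csSup hbdd hr)
  rw [sens_eq_sSup_sensSet, sensSet_snoc hinj,
    csSup_image_div_one_add ⟨r, hr⟩ hbdd fun _ ↦ nonneg_of_mem_sensSet,
    ← sens_eq_sSup_sensSet]
  field_simp
  ring
end

section
/- Let A ∈ ℝ^{n×d} have full column rank with rows a_1,…,a_n. Let S₁ be a matrix such that (1/2)‖Ax‖₁ ≤ ‖S₁Ax‖₁ ≤ (3/2)‖Ax‖₁ for all x ∈ ℝ^d, and let M ∈ ℝ^{m×d} be a nonempty matrix each of whose rows is a row of A, satisfying ‖Mx‖_∞ ≥ d^{−1/2}‖Ax‖_∞ for all x ∈ ℝ^d. Define ŝ := √d · max over rows m_j of M of σ_1^{S₁A}(m_j). Then (2/3) · max_{1≤i≤n} σ_1(a_i) ≤ ŝ ≤ 2√d · max_{1≤i≤n} σ_1(a_i). -/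
open Matrix BigOperators

lemma sens_one_eq {m d : ℕ} (B : Matrix (Fin m) (Fin d) ℝ) (a : Fin d → ℝ) :
    sens 1 B a = sSup {r : ℝ | ∃ x : Fin d → ℝ, B.mulVec x ≠ 0 ∧
      r = |a ⬝ᵥ x| / ∑ i, |B.mulVec x i|} := by
  unfold sens
  congr 1
  ext r
  simp [Real.rpow_one]

lemma sum_abs_pos_of_ne {k : ℕ} (v : Fin k → ℝ) (h : v ≠ 0) : 0 < ∑ i, |v i| := by
  obtain ⟨i, hi⟩ := Function.ne_iff.mp h
  exact Finset.sum_pos' (fun j _ => abs_nonneg _)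
    ⟨i, Finset.mem_univ i, abs_pos.2 hi⟩

lemma eq_zero_of_sum_abs_nonpos {k : ℕ} (v : Fin k → ℝ) (h : ∑ i, |v i| ≤ 0) :
    v = 0 := by
  by_contra hv
  exact absurd h (not_le.2 (sum_abs_pos_of_ne v hv))

lemma sens_nonneg {m d : ℕ} (B : Matrix (Fin m) (Fin d) ℝ) (a : Fin d → ℝ) :
    0 ≤ sens 1 B a := by
  rw [sens_one_eq]
  apply Real.sSup_nonneg
  rintro r ⟨x, hx, rfl⟩
  positivity

lemma sens_le {m d : ℕ} (B : Matrix (Fin m) (Fin d) ℝ) (a : Fin d → ℝ)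
    (c : ℝ) (hc : 0 ≤ c)
    (h : ∀ x, B.mulVec x ≠ 0 → |a ⬝ᵥ x| / ∑ i, |B.mulVec x i| ≤ c) :
    sens 1 B a ≤ c := by
  rw [sens_one_eq]
  apply Real.sSup_le _ hc
  rintro r ⟨x, hx, rfl⟩
  exact h x hx

lemma le_sens {m d : ℕ} (B : Matrix (Fin m) (Fin d) ℝ) (a : Fin d → ℝ)
    (c : ℝ)
    (hb : ∀ x, B.mulVec x ≠ 0 → |a ⬝ᵥ x| / ∑ i, |B.mulVec x i| ≤ c)
    (x : Fin d → ℝ) (hx : B.mulVec x ≠ 0) :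
    |a ⬝ᵥ x| / ∑ i, |B.mulVec x i| ≤ sens 1 B a := by
  rw [sens_one_eq]
  refine le_csSup ⟨c, ?_⟩ ⟨x, hx, rfl⟩
  rintro r ⟨y, hy, rfl⟩
  exact hb y hy

/-- **Correctness of the maximum-ℓ1-sensitivity estimator.**  Here `SA` is a
constant-factor ℓ1 subspace embedding of `A`, and `M` is an ℓ∞ subspace embedding
of `A` consisting of rows of `A`.  Then `ŝ := √d · max_j σ_1^{SA}(m_j)` satisfies
`(2/3)·max_i σ_1(a_i) ≤ ŝ ≤ 2√d·max_i σ_1(a_i)`. -/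
theorem max_l1_sensitivity_estimate
    {n d m₁ m : ℕ} (A : Matrix (Fin n) (Fin d) ℝ)
    (hA : LinearIndependent ℝ Aᵀ)
    (SA : Matrix (Fin m₁) (Fin d) ℝ)
    (hSA : ∀ x : Fin d → ℝ,
      (1 / 2) * ∑ j, |A.mulVec x j| ≤ ∑ j, |SA.mulVec x j| ∧
        ∑ j, |SA.mulVec x j| ≤ (3 / 2) * ∑ j, |A.mulVec x j|)
    (hm : 0 < m) (M : Matrix (Fin m) (Fin d) ℝ)
    (hMrows : ∀ j : Fin m, ∃ k : Fin n, M j = A k)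
    (hMinf : ∀ x : Fin d → ℝ,
      (⨆ j : Fin m, |M.mulVec x j|) ≥
        (Real.sqrt d)⁻¹ * ⨆ k : Fin n, |A.mulVec x k|) :
    (2 / 3) * (⨆ i : Fin n, sens 1 A (A i)) ≤
        Real.sqrt d * (⨆ j : Fin m, sens 1 SA (M j)) ∧
      Real.sqrt d * (⨆ j : Fin m, sens 1 SA (M j)) ≤
        2 * Real.sqrt d * ⨆ i : Fin n, sens 1 A (A i) := by
  have hFm : Nonempty (Fin m) := ⟨⟨0, hm⟩⟩
  set S : ℝ := ⨆ j : Fin m, sens 1 SA (M j) with hSdef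
  set T : ℝ := ⨆ i : Fin n, sens 1 A (A i) with hTdef
  have hS0 : 0 ≤ S := Real.iSup_nonneg fun j => sens_nonneg _ _
  have hT0 : 0 ≤ T := Real.iSup_nonneg fun i => sens_nonneg _ _
  have hsqrt0 : 0 ≤ Real.sqrt d := Real.sqrt_nonneg _
  -- nonvanishing transfer
  have hAtoSA : ∀ x : Fin d → ℝ, A.mulVec x ≠ 0 → SA.mulVec x ≠ 0 := by
    intro x hx hcon
    apply hx
    apply eq_zero_of_sum_abs_nonpos
    have h1 := (hSA x).1
    rw [hcon] at h1
    simp at h1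
    linarith
  have hSAtoA : ∀ x : Fin d → ℝ, SA.mulVec x ≠ 0 → A.mulVec x ≠ 0 := by
    intro x hx hcon
    apply hx
    apply eq_zero_of_sum_abs_nonpos
    have h2 := (hSA x).2
    rw [hcon] at h2
    simp at h2
    linarith
  -- row entry bound
  have hrow : ∀ (x : Fin d → ℝ) (k : Fin n), |A k ⬝ᵥ x| ≤ ∑ i, |A.mulVec x i| := by
    intro x k
    exact Finset.single_le_sum (f := fun i => |A.mulVec x i|)
      (fun i _ => abs_nonneg _) (Finset.mem_univ k)
  -- elements of sens sets of rows of A wrt SA are ≤ 2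
  have hbSA : ∀ (k : Fin n) (x : Fin d → ℝ), SA.mulVec x ≠ 0 →
      |A k ⬝ᵥ x| / ∑ i, |SA.mulVec x i| ≤ 2 := by
    intro k x hx
    have hpos := sum_abs_pos_of_ne _ hx
    rw [div_le_iff₀ hpos]
    have h1 := (hSA x).1
    have h2 := hrow x k
    linarith
  -- elements of sens sets of rows of A wrt A are ≤ 1
  have hbA : ∀ (k : Fin n) (x : Fin d → ℝ), A.mulVec x ≠ 0 →
      |A k ⬝ᵥ x| / ∑ i, |A.mulVec x i| ≤ 1 := by
    intro k x hx
    have hpos := sum_abs_pos_of_ne _ hx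
    rw [div_le_one hpos]
    exact hrow x k
  constructor
  · -- lower bound: (2/3) T ≤ √d S
    by_cases hd : d = 0
    · have hT : T ≤ 0 := by
        apply Real.iSup_le _ le_rfl
        intro i
        apply sens_le _ _ _ le_rfl
        intro x hx
        exfalso
        apply hx
        funext i
        simp [Matrix.mulVec, dotProduct]
        subst hd
        exact Finset.sum_of_isEmpty _
      nlinarith
    · have hdpos : (0:ℝ) < Real.sqrt d := Real.sqrt_pos.2 (by positivity)
      have key : T ≤ (3/2) * (Real.sqrt d * S) := by
        apply Real.iSup_le _ (by positivity)
        intro i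
        apply sens_le _ _ _ (by positivity)
        intro x hx
        have hSAx := hAtoSA x hx
        have hApos := sum_abs_pos_of_ne _ hx
        have hSApos := sum_abs_pos_of_ne _ hSAx
        -- pick the max row of M
        obtain ⟨j₀, hj₀⟩ := Finite.exists_max (fun j : Fin m => |M.mulVec x j|)
        have hsupM : (⨆ j : Fin m, |M.mulVec x j|) ≤ |M.mulVec x j₀| :=
          ciSup_le hj₀
        have hsupA : |A.mulVec x i| ≤ ⨆ k : Fin n, |A.mulVec x k| :=
          le_ciSup (f := fun k => |A.mulVec x k|)
            (Set.Finite.bddAbove (Set.finite_range _)) i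
        have hstep : |A i ⬝ᵥ x| ≤ Real.sqrt d * |M j₀ ⬝ᵥ x| := by
          have h1 := hMinf x
          have h2 : (⨆ k : Fin n, |A.mulVec x k|) ≤ Real.sqrt d * |M.mulVec x j₀| := by
            have := mul_le_mul_of_nonneg_left (le_trans h1 hsupM) hsqrt0
            calc (⨆ k : Fin n, |A.mulVec x k|)
                = Real.sqrt d * ((Real.sqrt d)⁻¹ * ⨆ k : Fin n, |A.mulVec x k|) := by
                  rw [← mul_assoc, mul_inv_cancel₀ (ne_of_gt hdpos), one_mul]
              _ ≤ Real.sqrt d * |M.mulVec x j₀| :=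
                  mul_le_mul_of_nonneg_left (le_trans h1 hsupM) hsqrt0
          exact le_trans hsupA h2
        obtain ⟨k₀, hk₀⟩ := hMrows j₀
        have hsens : |M j₀ ⬝ᵥ x| / ∑ i, |SA.mulVec x i| ≤ sens 1 SA (M j₀) := by
          apply le_sens SA (M j₀) 2 _ x hSAx
          intro y hy
          rw [hk₀]
          exact hbSA k₀ y hy
        have hsensS : sens 1 SA (M j₀) ≤ S :=
          le_ciSup (f := fun j => sens 1 SA (M j))
            (Set.Finite.bddAbove (Set.finite_range _)) j₀
        have hAx23 : (2/3) * ∑ i, |SA.mulVec x i| ≤ ∑ i, |A.mulVec x i| := by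
          have := (hSA x).2
          linarith
        calc |A i ⬝ᵥ x| / ∑ i, |A.mulVec x i|
            ≤ (Real.sqrt d * |M j₀ ⬝ᵥ x|) / ∑ i, |A.mulVec x i| := by
              exact (div_le_div_iff_of_pos_right hApos).2 hstep
          _ ≤ (Real.sqrt d * |M j₀ ⬝ᵥ x|) / ((2/3) * ∑ i, |SA.mulVec x i|) := by
              apply div_le_div_of_nonneg_left (by positivity) (by positivity) hAx23
          _ = (3/2) * (Real.sqrt d * (|M j₀ ⬝ᵥ x| / ∑ i, |SA.mulVec x i|)) := by
              field_simp
          _ ≤ (3/2) * (Real.sqrt d * sens 1 SA (M j₀)) := by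
              apply mul_le_mul_of_nonneg_left _ (by norm_num)
              exact mul_le_mul_of_nonneg_left hsens hsqrt0
          _ ≤ (3/2) * (Real.sqrt d * S) := by
              apply mul_le_mul_of_nonneg_left _ (by norm_num)
              exact mul_le_mul_of_nonneg_left hsensS hsqrt0
      linarith
  · -- upper bound: √d S ≤ 2 √d T
    have hStep : S ≤ 2 * T := by
      apply ciSup_le
      intro j
      obtain ⟨k, hk⟩ := hMrows j
      rw [hk]
      apply sens_le _ _ _ (by positivity)
      intro x hx
      have hAx := hSAtoA x hx
      have hApos := sum_abs_pos_of_ne _ hAx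
      have hSApos := sum_abs_pos_of_ne _ hx
      have h1 : |A k ⬝ᵥ x| / ∑ i, |SA.mulVec x i|
          ≤ 2 * (|A k ⬝ᵥ x| / ∑ i, |A.mulVec x i|) := by
        have hh : |A k ⬝ᵥ x| / ∑ i, |SA.mulVec x i|
            ≤ |A k ⬝ᵥ x| / ((1/2) * ∑ i, |A.mulVec x i|) :=
          div_le_div_of_nonneg_left (abs_nonneg _) (by positivity) (hSA x).1
        have he : |A k ⬝ᵥ x| / ((1/2) * ∑ i, |A.mulVec x i|)
            = 2 * (|A k ⬝ᵥ x| / ∑ i, |A.mulVec x i|) := by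
          field_simp
        linarith
      have h3 : |A k ⬝ᵥ x| / ∑ i, |A.mulVec x i| ≤ sens 1 A (A k) :=
        le_sens A (A k) 1 (hbA k) x hAx
      have h4 : sens 1 A (A k) ≤ T :=
        le_ciSup (f := fun i => sens 1 A (A i))
          (Set.Finite.bddAbove (Set.finite_range _)) k
      linarith
    calc Real.sqrt d * S ≤ Real.sqrt d * (2 * T) :=
          mul_le_mul_of_nonneg_left hStep hsqrt0
      _ = 2 * Real.sqrt d * T := by ring
end
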